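/- Let v ∈ ℂ^4 be a quadrilateral such that A(M^n v) ≠ 0 for every integer n ≥ 1. Then the centroids under the midpoint iteration are constant from the first iterate onward and equal to the vertex centroid: for every n ≥ 1, G(M^n v) = (1/4)·∑_{k=0}^3 v_k. -/
import Mathlib

open Complex

noncomputable section

/-- The midpoint map on quadrilaterals: `(Mv)_k = (v_k + v_{k+1})/2`, indices mod 4. -/
def M4 (v : Fin 4 → ℂ) : Fin 4 → ℂ := fun k => (v k + v (k + 1)) / 2

/-- Signed area of a quadrilateral. -/
def A4 (v : Fin 4 → ℂ) : ℝ := (1 / 2) * ∑ k : Fin 4, ((starRingEnd ℂ) (v k) * v (k + 1)).im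

/-- The quantity `Z(v) = ∑ (v_k + v_{k+1})·Im(conj(v_k)·v_{k+1})` for a quadrilateral. -/
def Z4 (v : Fin 4 → ℂ) : ℂ :=
  ∑ k : Fin 4, (v k + v (k + 1)) * (((starRingEnd ℂ) (v k) * v (k + 1)).im : ℂ)

/-- The centroid `G(v) = Z(v)/(6·A(v))` of a quadrilateral. -/
def G4 (v : Fin 4 → ℂ) : ℂ := Z4 v / (6 * (A4 v : ℂ))

lemma fin01 : (0:Fin 4)+1 = 1 := rfl
lemma fin12 : (1:Fin 4)+1 = 2 := rfl
lemma fin23 : (2:Fin 4)+1 = 3 := rfl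
lemma fin30 : (3:Fin 4)+1 = 0 := rfl

lemma M4_sum (w : Fin 4 → ℂ) : ∑ k : Fin 4, M4 w k = ∑ k : Fin 4, w k := by
  simp only [M4, Fin.sum_univ_four, fin01, fin12, fin23, fin30]
  ring

lemma Z4_M4 (w : Fin 4 → ℂ) :
    Z4 (M4 w) = (3 / 2) * (A4 (M4 w) : ℂ) * ∑ k : Fin 4, w k := by
  simp only [Z4, A4, M4, Fin.sum_univ_four, fin01, fin12, fin23, fin30]
  apply Complex.ext <;>
    simp [Complex.add_re, Complex.add_im, Complex.mul_re, Complex.mul_im,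
      Complex.div_re, Complex.div_im, Complex.normSq, Complex.ofReal_mul,
      Complex.ofReal_add, Complex.ofReal_sub] <;>
    ring

theorem quadrilateral_centroids_constant (v : Fin 4 → ℂ)
    (hA : ∀ n : ℕ, 1 ≤ n → A4 (M4^[n] v) ≠ 0) :
    ∀ n : ℕ, 1 ≤ n → G4 (M4^[n] v) = (1 / 4) * ∑ k : Fin 4, v k := by
  have hsum : ∀ m : ℕ, ∑ k : Fin 4, (M4^[m] v) k = ∑ k : Fin 4, v k := by
    intro m
    induction m with
    | zero => simp
    | succ m ih =>
      rw [Function.iterate_succ_apply', M4_sum, ih]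
  intro n hn
  obtain ⟨m, rfl⟩ : ∃ m, n = m + 1 := ⟨n - 1, by omega⟩
  have hne := hA (m + 1) hn
  rw [Function.iterate_succ_apply'] at hne ⊢
  have hS : ∑ k : Fin 4, (M4^[m] v) k = ∑ k : Fin 4, v k := hsum m
  rw [G4, Z4_M4, hS]
  have hA' : (A4 (M4 (M4^[m] v)) : ℂ) ≠ 0 := Complex.ofReal_ne_zero.mpr hne
  field_simp
  ring
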